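/- Suppose u(x) = Σ_{j=1}^n βⱼ Φ_k(x, yⱼ) − Σ_{q=1}^m α_q Φ_k(x, x_q) vanishes identically on a connected open set Υ containing all points yⱼ and x_q in its closure but excluding them, where Φ_k(x,y) = (i/4)H₀⁽¹⁾(k|x−y|), all βⱼ ≠ 0, all α_q ≠ 0, the yⱼ are pairwise distinct and the x_q are pairwise distinct. Then m = n and, after reindexing, x_q = y_q and α_q = β_q for all q. -/

import Mathlib

open Real MeasureTheory Filter

/-- Bessel function of the first kind of order `n`. -/
noncomputable def besselJ (n : ℕ) (x : ℝ) : ℝ :=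
  (1 / π) * ∫ θ in (0:ℝ)..π, Real.cos (n * θ - x * Real.sin θ)

/-- Bessel function of the second kind of order `n`. -/
noncomputable def besselY (n : ℕ) (x : ℝ) : ℝ :=
  (1 / π) * ∫ θ in (0:ℝ)..π, Real.sin (x * Real.sin θ - n * θ)
    - (1 / π) * ∫ t in Set.Ioi (0:ℝ),
        (Real.exp (n * t) + (-1 : ℝ) ^ n * Real.exp (-(n : ℝ) * t)) *
          Real.exp (-x * Real.sinh t)

/-- The plane `ℝ²`. -/
abbrev Plane := EuclideanSpace ℝ (Fin 2)

/-- The fundamental solution of the 2D Helmholtz equation,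
`Φ_k(x,y) = (i/4) H₀⁽¹⁾(k|x−y|)` where `H₀⁽¹⁾ = J₀ + iY₀`. -/
noncomputable def Phi (k : ℝ) (x y : Plane) : ℂ :=
  (Complex.I / 4) *
    ((besselJ 0 (k * dist x y) : ℂ) + Complex.I * (besselY 0 (k * dist x y) : ℂ))

/-- The Laplacian of a complex-valued function on the plane,
as the sum of the pure second partial derivatives. -/
noncomputable def lap (f : Plane → ℂ) (x : Plane) : ℂ :=
  ∑ i : Fin 2,
    iteratedFDeriv ℝ 2 f x ![EuclideanSpace.single i (1:ℝ), EuclideanSpace.single i (1:ℝ)]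

/-!
For `x > 0`, `Y₀(x) = (1/π) ∫₀^π sin (x sin θ) dθ - (2/π) ∫₀^∞ e^{-x sinh t} dt`. The first term
is bounded by `1`, and the second is antitone in `x` and tends to `+∞` as `x → 0⁺`. Hence
`‖Φ_k(·, p)‖ → ∞` at `p`, while `Φ_k(·, y)` stays bounded near `p` when `y ≠ p`.

Encode the sources as the finitely supported coefficient function
`μ = Σⱼ βⱼ δ_{yⱼ} - Σ_q α_q δ_{x_q}`, so that `u = Σ_z μ(z) Φ_k(·, z)`. Approaching a point
`p` of the support of `μ` from inside `Υ`, the term `μ(p) Φ_k(·, p)` is unbounded and the others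
are bounded, so `u ≡ 0` forces `μ(p) = 0`. Therefore `μ = 0`. Since the points are distinct
and the coefficients are nonzero, the two sums of Dirac masses can only agree through a
bijection that matches both points and coefficients.
-/

open Set Topology Asymptotics

noncomputable def expSinhIntegral (x : ℝ) : ℝ := ∫ t in Ioi 0, exp (-x * sinh t)

lemma abs_one_div_pi_mul_integral_le_one {f : ℝ → ℝ} (hf : ∀ θ, |f θ| ≤ 1) :
    |1 / π * ∫ θ in (0:ℝ)..π, f θ| ≤ 1 := by
  have h : ‖∫ θ in (0:ℝ)..π, f θ‖ ≤ 1 * |π - 0| :=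
    intervalIntegral.norm_integral_le_of_norm_le_const fun θ _ => hf θ
  rw [abs_mul, abs_of_pos (by positivity : (0:ℝ) < 1 / π)]
  calc 1 / π * |∫ θ in (0:ℝ)..π, f θ| ≤ 1 / π * (1 * |π - 0|) := by gcongr; exact h
    _ = 1 := by rw [sub_zero, abs_of_pos pi_pos]; field_simp

lemma abs_besselJ_le_one (n : ℕ) (x : ℝ) : |besselJ n x| ≤ 1 :=
  abs_one_div_pi_mul_integral_le_one fun _ => abs_cos_le_one _

lemma besselY_zero_eq (x : ℝ) :
    besselY 0 x = 1 / π * (∫ θ in (0:ℝ)..π, sin (x * sin θ)) - 2 / π * expSinhIntegral x := by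
  simp only [besselY, CharP.cast_eq_zero, zero_mul, sub_zero, exp_zero, pow_zero, neg_zero,
    one_mul, expSinhIntegral]
  rw [show (fun t : ℝ => (1 + 1) * exp (-x * sinh t)) = fun t => 2 * exp (-x * sinh t) by
    norm_num, integral_const_mul, intervalIntegral.integral_sub (by
      apply Continuous.intervalIntegrable; fun_prop) intervalIntegrable_const,
    intervalIntegral.integral_const, smul_eq_mul]
  field_simp
  ring

lemma integrableOn_exp_neg_mul_sinh {x : ℝ} (hx : 0 < x) :
    IntegrableOn (fun t => exp (-x * sinh t)) (Ioi 0) := by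
  refine (exp_neg_integrableOn_Ioi 0 hx).mono' (by fun_prop) ?_
  filter_upwards [self_mem_ae_restrict measurableSet_Ioi] with t ht
  rw [norm_of_nonneg (exp_pos _).le, exp_le_exp]
  nlinarith [self_le_sinh_iff.2 (le_of_lt ht)]

lemma expSinhIntegral_nonneg (x : ℝ) : 0 ≤ expSinhIntegral x :=
  setIntegral_nonneg measurableSet_Ioi fun _ _ => (exp_pos _).le

lemma expSinhIntegral_antitoneOn : AntitoneOn expSinhIntegral (Ioi 0) := by
  intro r hr x _ hrx
  refine setIntegral_mono_on (integrableOn_exp_neg_mul_sinh (hr.trans_le hrx))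
    (integrableOn_exp_neg_mul_sinh hr) measurableSet_Ioi fun t ht => ?_
  rw [exp_le_exp]
  nlinarith [sinh_pos_iff.2 ht]

lemma mul_exp_neg_mul_sinh_le_expSinhIntegral {x T : ℝ} (hx : 0 < x) (hT : 0 < T) :
    T * exp (-x * sinh T) ≤ expSinhIntegral x := by
  have hint := integrableOn_exp_neg_mul_sinh hx
  calc T * exp (-x * sinh T) = ∫ _ in Ioc 0 T, exp (-x * sinh T) := by
        simp [measureReal_def, hT.le]
    _ ≤ ∫ t in Ioc 0 T, exp (-x * sinh t) := by
        refine setIntegral_mono_on (by simp) (hint.mono_set Ioc_subset_Ioi_self)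
          measurableSet_Ioc fun t ht => ?_
        rw [exp_le_exp]
        nlinarith [sinh_le_sinh.2 ht.2]
    _ ≤ expSinhIntegral x :=
        setIntegral_mono_set hint (.of_forall fun _ => (exp_pos _).le)
          Ioc_subset_Ioi_self.eventuallyLE

lemma tendsto_expSinhIntegral_nhdsGT_zero : Tendsto expSinhIntegral (𝓝[>] 0) atTop := by
  refine tendsto_atTop.2 fun M => ?_
  set T := max M 0 + 1
  have hT : 0 < T := by positivity
  have hcont : Tendsto (fun x : ℝ => T * exp (-x * sinh T)) (𝓝 0) (𝓝 T) := by
    simpa using (show Continuous fun x : ℝ => T * exp (-x * sinh T) by fun_prop).tendsto 0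
  filter_upwards [nhdsWithin_le_nhds (hcont.eventually_const_le
    ((le_max_left M 0).trans_lt (lt_add_one _))),
    self_mem_nhdsWithin] with x hMx (hx : 0 < x)
  exact hMx.trans (mul_exp_neg_mul_sinh_le_expSinhIntegral hx hT)

lemma tendsto_besselY_zero_nhdsGT_zero : Tendsto (besselY 0) (𝓝[>] 0) atBot := by
  have hY : ∀ x, besselY 0 x ≤ 1 - 2 / π * expSinhIntegral x := fun x => by
    have := (abs_le.1 (abs_one_div_pi_mul_integral_le_one fun θ => abs_sin_le_one (x * sin θ))).2
    rw [besselY_zero_eq]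
    linarith
  refine tendsto_atBot_mono hY (tendsto_atBot_add_const_left _ 1 ?_)
  have := tendsto_neg_atTop_atBot.comp
    (tendsto_expSinhIntegral_nhdsGT_zero.const_mul_atTop (by positivity : (0:ℝ) < 2 / π))
  simpa [sub_eq_add_neg, Function.comp_def] using this

lemma abs_besselY_zero_le {r x : ℝ} (hr : 0 < r) (hrx : r ≤ x) :
    |besselY 0 x| ≤ 1 + 2 / π * expSinhIntegral r := by
  rw [besselY_zero_eq]
  have hsin := abs_one_div_pi_mul_integral_le_one fun θ => abs_sin_le_one (x * sin θ)
  have hE : |2 / π * expSinhIntegral x| ≤ 2 / π * expSinhIntegral r := by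
    rw [abs_of_nonneg (by have := expSinhIntegral_nonneg x; positivity)]
    gcongr
    exact expSinhIntegral_antitoneOn hr (hr.trans_le hrx) hrx
  exact (abs_sub _ _).trans (add_le_add hsin hE)

lemma norm_Phi (k : ℝ) (x y : Plane) :
    ‖Phi k x y‖ = ‖(besselJ 0 (k * dist x y) : ℂ) + Complex.I * besselY 0 (k * dist x y)‖ / 4 := by
  rw [Phi, norm_mul, norm_div, Complex.norm_I]
  norm_num
  ring

lemma abs_besselY_zero_le_four_mul_norm_Phi (k : ℝ) (x y : Plane) :
    |besselY 0 (k * dist x y)| ≤ 4 * ‖Phi k x y‖ := by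
  rw [norm_Phi, mul_div_cancel₀ _ four_ne_zero]
  simpa using Complex.abs_im_le_norm ((besselJ 0 (k * dist x y) : ℂ) +
    Complex.I * besselY 0 (k * dist x y))

lemma four_mul_norm_Phi_le (k : ℝ) (x y : Plane) :
    4 * ‖Phi k x y‖ ≤ 1 + |besselY 0 (k * dist x y)| := by
  rw [norm_Phi, mul_div_cancel₀ _ four_ne_zero]
  refine (norm_add_le _ _).trans (add_le_add ?_ ?_)
  · simpa using abs_besselJ_le_one 0 (k * dist x y)
  · simp

lemma tendsto_norm_Phi_nhdsNE {k : ℝ} (hk : 0 < k) (p : Plane) :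
    Tendsto (fun x => ‖Phi k x p‖) (𝓝[≠] p) atTop := by
  have hdist : Tendsto (fun x => k * dist x p) (𝓝[≠] p) (𝓝[>] 0) := by
    refine tendsto_nhdsWithin_iff.2 ⟨?_, ?_⟩
    · have : Continuous fun x : Plane => k * dist x p := by fun_prop
      simpa using (this.tendsto p).mono_left nhdsWithin_le_nhds
    · filter_upwards [self_mem_nhdsWithin] with x hx using mul_pos hk (dist_pos.2 hx)
  have hY := tendsto_abs_atBot_atTop.comp (tendsto_besselY_zero_nhdsGT_zero.comp hdist)
  refine tendsto_atTop_mono (fun x => ?_) (hY.atTop_div_const (by norm_num : (0:ℝ) < 4))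
  have := abs_besselY_zero_le_four_mul_norm_Phi k x p
  simp only [Function.comp_apply]
  linarith

lemma Phi_isBigO_one {k : ℝ} (hk : 0 < k) {p y : Plane} (hy : y ≠ p) :
    (fun x => Phi k x y) =O[𝓝 p] (fun _ => (1 : ℝ)) := by
  have hpy := dist_pos.2 hy.symm
  have hr : 0 < k * dist p y / 2 := by positivity
  refine (isBigO_one_iff ℝ).2 (isBoundedUnder_of_eventually_le (a := (2 + 2 / π *
    expSinhIntegral (k * dist p y / 2)) / 4) ?_)
  have hnear : ∀ᶠ x in 𝓝 p, dist p y / 2 < dist x y :=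
    (continuous_id.dist continuous_const).tendsto p |>.eventually_const_lt (half_lt_self hpy)
  filter_upwards [hnear] with x hx
  have := abs_besselY_zero_le hr (x := k * dist x y) (by nlinarith)
  have := four_mul_norm_Phi_le k x y
  linarith

lemma eq_zero_of_mul_add_eq_zero {α 𝕜 : Type*} [NormedField 𝕜] {l : Filter α} [l.NeBot]
    {g R : α → 𝕜} {c : 𝕜} (hg : Tendsto (fun x => ‖g x‖) l atTop)
    (hR : R =O[l] (fun _ => (1 : ℝ))) (h : ∀ᶠ x in l, c * g x + R x = 0) : c = 0 := by
  by_contra hc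
  refine not_isBoundedUnder_of_tendsto_atTop hg ((isBigO_one_iff ℝ).1 ?_)
  have : g =ᶠ[l] fun x => -c⁻¹ * R x := h.mono fun x hx => by
    field_simp; linear_combination hx
  exact (hR.const_mul_left _).congr' this.symm .rfl

lemma Finsupp.eq_zero_of_linearCombination_Phi_eq_zero {k : ℝ} (hk : 0 < k) {Υ : Set Plane}
    (μ : Plane →₀ ℂ) (hμ : ∀ z ∈ μ.support, z ∈ closure Υ \ Υ)
    (h : ∀ x ∈ Υ, linearCombination ℂ (Phi k x) μ = 0) : μ = 0 := by
  classical
  ext p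
  by_contra hp
  have hps : p ∈ μ.support := mem_support_iff.2 hp
  obtain ⟨hpcl, hpΥ⟩ := hμ p hps
  have : (𝓝[Υ] p).NeBot := mem_closure_iff_nhdsWithin_neBot.1 hpcl
  have hΥ : 𝓝[Υ] p ≤ 𝓝[≠] p := nhdsWithin_mono p fun x hx (hxp : x = p) => hpΥ (hxp ▸ hx)
  have hR : (fun x => ∑ z ∈ μ.support.erase p, μ z * Phi k x z) =O[𝓝[Υ] p]
      (fun _ => (1 : ℝ)) := (IsBigO.fun_sum fun z hz =>
    (Phi_isBigO_one hk (Finset.ne_of_mem_erase hz)).const_mul_left (μ z)).mono nhdsWithin_le_nhds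
  refine hp (eq_zero_of_mul_add_eq_zero ((tendsto_norm_Phi_nhdsNE hk p).mono_left hΥ) hR ?_)
  filter_upwards [self_mem_nhdsWithin] with x hx
  rw [← h x hx, linearCombination_apply, Finsupp.sum, ← Finset.add_sum_erase _ _ hps]
  simp

namespace Finsupp

variable {ι κ X M : Type*} [Fintype ι] [Fintype κ] [AddCommMonoid M]

lemma sum_single_apply_self {x : ι → X} (hx : Function.Injective x) (a : ι → M) (i : ι) :
    (∑ j, single (x j) (a j)) (x i) = a i := by
  classical
  simp [finsetSum_apply, single_apply, hx.eq_iff]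

lemma mem_range_of_sum_single_apply_ne_zero {x : ι → X} {a : ι → M} {z : X}
    (hz : (∑ j, single (x j) (a j)) z ≠ 0) : z ∈ range x := by
  classical
  contrapose! hz
  simp [finsetSum_apply, fun j => (ne_of_mem_of_not_mem (mem_range_self j) hz)]

lemma exists_equiv_of_sum_single_eq {x : ι → X} {y : κ → X} {a : ι → M} {b : κ → M}
    (hx : Function.Injective x) (hy : Function.Injective y) (ha : ∀ i, a i ≠ 0)
    (hb : ∀ j, b j ≠ 0) (h : ∑ i, single (x i) (a i) = ∑ j, single (y j) (b j)) :
    ∃ e : ι ≃ κ, ∀ i, x i = y (e i) ∧ a i = b (e i) := by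
  have hxy (i : ι) : ∃ j, y j = x i :=
    mem_range_of_sum_single_apply_ne_zero (by rw [← h, sum_single_apply_self hx]; exact ha i)
  have hyx (j : κ) : ∃ i, x i = y j :=
    mem_range_of_sum_single_apply_ne_zero (by rw [h, sum_single_apply_self hy]; exact hb j)
  choose f hf using hxy
  have hbij : Function.Bijective f :=
    ⟨fun i i' hii' => hx (by rw [← hf, ← hf, hii']),
      fun j => (hyx j).imp fun i hi => hy (by rw [hf, hi])⟩
  refine ⟨Equiv.ofBijective f hbij, fun i => ⟨(hf i).symm, ?_⟩⟩
  calc a i = (∑ j, single (y j) (b j)) (y (f i)) := by rw [← h, hf, sum_single_apply_self hx]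
    _ = b (f i) := sum_single_apply_self hy b (f i)

end Finsupp

theorem singular_sources_match_general (k : ℝ) (hk : 0 < k)
    (m n : ℕ) (xs : Fin m → Plane) (ys : Fin n → Plane)
    (α : Fin m → ℂ) (β : Fin n → ℂ)
    (hα : ∀ q, α q ≠ 0) (hβ : ∀ j, β j ≠ 0)
    (hxinj : Function.Injective xs) (hyinj : Function.Injective ys)
    (Υ : Set Plane)
    (hxcl : ∀ q, xs q ∈ closure Υ ∧ xs q ∉ Υ)
    (hycl : ∀ j, ys j ∈ closure Υ ∧ ys j ∉ Υ)
    (hvan : ∀ x ∈ Υ,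
      (∑ j, β j * Phi k x (ys j)) - (∑ q, α q * Phi k x (xs q)) = 0) :
    m = n ∧ ∃ e : Fin m ≃ Fin n, ∀ q, xs q = ys (e q) ∧ α q = β (e q) := by
  set μy : Plane →₀ ℂ := ∑ j, Finsupp.single (ys j) (β j)
  set μx : Plane →₀ ℂ := ∑ q, Finsupp.single (xs q) (α q)
  have hu (x : Plane) : Finsupp.linearCombination ℂ (Phi k x) (μy - μx) =
      (∑ j, β j * Phi k x (ys j)) - ∑ q, α q * Phi k x (xs q) := by
    simp [μy, μx, map_sub, map_sum, Finsupp.linearCombination_single]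
  have hsupp (z : Plane) (hz : z ∈ (μy - μx).support) : z ∈ closure Υ \ Υ := by
    rw [Finsupp.mem_support_iff, Finsupp.sub_apply] at hz
    by_cases hzy : μy z = 0
    · have hzx : μx z ≠ 0 := by simpa [hzy] using hz
      obtain ⟨q, rfl⟩ := Finsupp.mem_range_of_sum_single_apply_ne_zero hzx
      exact hxcl q
    · obtain ⟨j, rfl⟩ := Finsupp.mem_range_of_sum_single_apply_ne_zero hzy
      exact hycl j
  have hμ : μx = μy := (sub_eq_zero.1 (Finsupp.eq_zero_of_linearCombination_Phi_eq_zero hk _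
    hsupp fun x hx => (hu x).trans (hvan x hx))).symm
  obtain ⟨e, he⟩ := Finsupp.exists_equiv_of_sum_single_eq hxinj hyinj hα hβ hμ
  exact ⟨Fin.equiv_iff_eq.1 ⟨e⟩, e, he⟩

/-- If `u(x) = Σⱼ βⱼ Φ_k(x,yⱼ) − Σ_q α_q Φ_k(x,x_q)` vanishes
identically on a connected open set `Υ` whose closure contains all the points
`yⱼ`, `x_q` but which excludes them, where all coefficients are nonzero and the
`yⱼ` (resp. `x_q`) are pairwise distinct, then `m = n` and after reindexing
`x_q = y_q` and `α_q = β_q`. -/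
theorem singular_sources_match (k : ℝ) (hk : 0 < k)
    (m n : ℕ) (xs : Fin m → Plane) (ys : Fin n → Plane)
    (α : Fin m → ℂ) (β : Fin n → ℂ)
    (hα : ∀ q, α q ≠ 0) (hβ : ∀ j, β j ≠ 0)
    (hxinj : Function.Injective xs) (hyinj : Function.Injective ys)
    (Υ : Set Plane) (hΥo : IsOpen Υ) (hΥc : IsConnected Υ)
    (hxcl : ∀ q, xs q ∈ closure Υ ∧ xs q ∉ Υ)
    (hycl : ∀ j, ys j ∈ closure Υ ∧ ys j ∉ Υ)
    (hvan : ∀ x ∈ Υ,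
      (∑ j, β j * Phi k x (ys j)) - (∑ q, α q * Phi k x (xs q)) = 0) :
    m = n ∧ ∃ e : Fin m ≃ Fin n, ∀ q, xs q = ys (e q) ∧ α q = β (e q) :=
  singular_sources_match_general k hk m n xs ys α β hα hβ hxinj hyinj Υ hxcl hycl hvan
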